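/- arXiv:1707.08598 — 3 statements merged into one kernel-verified Lean document; each statement's English description precedes it below -/
import Mathlib

section
/- Fix an integer k ≥ 1 and assume |C| ≥ k+1. For any two linear orders v and v' on C, the following are equivalent: (i) top_k(v) = top_k(v'); (ii) for every finite list U of linear orders on C, the k-approval winner of the profile consisting of U together with v equals the k-approval winner of the profile consisting of U together with v'. -/
open scoped Classical

namespace Paper

variable {C : Type*}

/-- The set of the `k` highest-ranked candidates in the vote `v`. -/
noncomputable def topk [Fintype C] (k : ℕ) (v : LinearOrder C) : Finset C :=
  Finset.univ.filter fun c => (Finset.univ.filter fun d => v.lt c d).card < k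

/-- The `k`-approval score of candidate `c` in the profile `V` (a finite list of votes). -/
noncomputable def sck [Fintype C] (k : ℕ) (V : List (LinearOrder C)) (c : C) : ℕ :=
  (V.map fun v => if c ∈ topk k v then (1 : ℕ) else 0).sum

/-- The `k`-approval winner of the profile `V` with tie-breaking order `tb`:
the `tb`-greatest candidate among the candidates with maximal `k`-approval score;
equivalently, the unique candidate beating every other candidate. -/
noncomputable def winner [Fintype C] [Nonempty C] (k : ℕ) (tb : LinearOrder C)
    (V : List (LinearOrder C)) : C :=
  @Finset.max' C tb (Finset.univ.filter fun x => ∀ y, sck k V y ≤ sck k V x)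
    (by
      obtain ⟨b, -, hb⟩ := Finset.exists_max_image Finset.univ (sck k V)
        ⟨Classical.arbitrary C, Finset.mem_univ _⟩
      exact ⟨b, Finset.mem_filter.mpr ⟨Finset.mem_univ _, fun y => hb y (Finset.mem_univ y)⟩⟩)

lemma sck_append [Fintype C] (k : ℕ) (U : List (LinearOrder C)) (w : LinearOrder C) (c : C) :
    sck k (U ++ [w]) c = sck k U c + (if c ∈ topk k w then 1 else 0) := by
  simp [sck]

lemma winner_congr [Fintype C] [Nonempty C] (k : ℕ) (tb : LinearOrder C)
    (V V' : List (LinearOrder C)) (h : sck k V = sck k V') :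
    winner k tb V = winner k tb V' := by
  unfold winner
  congr 1
  all_goals rw [h]

lemma winner_eq_of_strict_max [Fintype C] [Nonempty C] (k : ℕ) (tb : LinearOrder C)
    (V : List (LinearOrder C)) (a : C) (h : ∀ c, c ≠ a → sck k V c < sck k V a) :
    winner k tb V = a := by
  have hset : (Finset.univ.filter fun x => ∀ y, sck k V y ≤ sck k V x) = {a} := by
    ext x
    simp only [Finset.mem_filter, Finset.mem_univ, true_and, Finset.mem_singleton]
    constructor
    · intro hx
      by_contra hxa
      exact absurd (hx a) (not_le.mpr (h x hxa))
    · intro hxa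
      subst hxa
      intro y
      rcases eq_or_ne y x with rfl | hy
      · exact le_refl _
      · exact le_of_lt (h y hy)
  have hmem : winner k tb V ∈ (Finset.univ.filter fun x => ∀ y, sck k V y ≤ sck k V x) :=
    @Finset.max'_mem C tb _ _
  rw [hset] at hmem
  exact Finset.mem_singleton.mp hmem

/-- The rank function: number of candidates strictly above `c` in order `v`. -/
noncomputable def rnk [Fintype C] (v : LinearOrder C) (c : C) : ℕ :=
  (Finset.univ.filter fun d => v.lt c d).card

lemma rnk_injective [Fintype C] (v : LinearOrder C) : Function.Injective (rnk v) := by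
  letI := v
  have key : ∀ c c', v.lt c c' → rnk v c' < rnk v c := by
    intro c c' hcc'
    apply Finset.card_lt_card
    constructor
    · intro d hd
      simp only [Finset.mem_filter, Finset.mem_univ, true_and] at hd ⊢
      exact lt_trans hcc' hd
    · intro hsub
      have : c' ∈ Finset.univ.filter fun d => v.lt c d := by
        simp only [Finset.mem_filter, Finset.mem_univ, true_and]; exact hcc'
      have := hsub this
      simp only [Finset.mem_filter, Finset.mem_univ, true_and] at this
      exact lt_irrefl c' this
  intro c c' h
  by_contra hne
  rcases lt_or_gt_of_ne hne with hlt | hlt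
  · have := key c c' hlt; omega
  · have := key c' c hlt; omega

lemma rnk_lt_card [Fintype C] [Nonempty C] (v : LinearOrder C) (c : C) : rnk v c < Fintype.card C := by
  letI := v
  have : (Finset.univ.filter fun d => v.lt c d) ⊆ Finset.univ.erase c := by
    intro d hd
    simp only [Finset.mem_filter, Finset.mem_univ, true_and] at hd
    exact Finset.mem_erase.mpr ⟨fun h => lt_irrefl c (h ▸ hd), Finset.mem_univ _⟩
  calc rnk v c ≤ (Finset.univ.erase c).card := Finset.card_le_card this
    _ = Fintype.card C - 1 := by rw [Finset.card_erase_of_mem (Finset.mem_univ _), Finset.card_univ]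
    _ < Fintype.card C := Nat.sub_lt Fintype.card_pos Nat.one_pos

lemma image_rnk [Fintype C] [Nonempty C] (v : LinearOrder C) :
    Finset.univ.image (rnk v) = Finset.range (Fintype.card C) := by
  apply Finset.eq_of_subset_of_card_le
  · intro x hx
    simp only [Finset.mem_image] at hx
    obtain ⟨c, -, rfl⟩ := hx
    exact Finset.mem_range.mpr (rnk_lt_card v c)
  · rw [Finset.card_range, Finset.card_image_of_injective _ (rnk_injective v), Finset.card_univ]

lemma card_topk [Fintype C] [Nonempty C] (k : ℕ) (hcard : k ≤ Fintype.card C) (v : LinearOrder C) :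
    (topk k v).card = k := by
  have h1 : topk k v = Finset.univ.filter fun c => rnk v c < k := rfl
  have h2 : (topk k v).image (rnk v) = (Finset.univ.image (rnk v)).filter (· < k) := by
    rw [h1, Finset.filter_image]
  have h3 : (Finset.range (Fintype.card C)).filter (· < k) = Finset.range k := by
    ext x
    simp only [Finset.mem_filter, Finset.mem_range]
    omega
  have := Finset.card_image_of_injective (topk k v) (rnk_injective v)
  rw [h2, image_rnk, h3, Finset.card_range] at this
  omega

/-- For every `k`-element set `T`, there is a vote with `topk = T`. -/
lemma exists_vote [Fintype C] (k : ℕ) (tb : LinearOrder C) (T : Finset C) (hT : T.card = k) :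
    ∃ w : LinearOrder C, topk k w = T := by
  classical
  set n := Fintype.card C with hn
  set idx : C → ℕ := fun x => ((Fintype.equivFin C) x : ℕ) with hidx
  have hidx_lt : ∀ x, idx x < n := fun x => ((Fintype.equivFin C) x).isLt
  have hidx_inj : Function.Injective idx := fun x y h =>
    (Fintype.equivFin C).injective (Fin.ext h)
  set f : C → ℕ := fun x => (if x ∈ T then n else 0) + idx x with hfdef
  have hfT : ∀ x ∈ T, f x = n + idx x := fun x hx => by simp [hfdef, hx]
  have hfN : ∀ x ∉ T, f x = idx x := fun x hx => by simp [hfdef, hx]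
  have hinj : Function.Injective f := by
    intro x y hxy
    by_cases hx : x ∈ T <;> by_cases hy : y ∈ T
    · rw [hfT x hx, hfT y hy] at hxy
      exact hidx_inj (by omega)
    · rw [hfT x hx, hfN y hy] at hxy
      exact absurd hxy (by have := hidx_lt y; omega)
    · rw [hfN x hx, hfT y hy] at hxy
      exact absurd hxy (by have := hidx_lt x; omega)
    · rw [hfN x hx, hfN y hy] at hxy
      exact hidx_inj hxy
  refine ⟨LinearOrder.lift' f hinj, ?_⟩
  set w := LinearOrder.lift' f hinj with hw
  have hlt : ∀ x y : C, w.lt x y ↔ f x < f y := fun x y => Iff.rfl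
  have hmem : ∀ x y : C, x ∈ T → y ∉ T → w.lt y x := by
    intro x y hx hy
    rw [hlt, hfT x hx, hfN y hy]
    have := hidx_lt y
    omega
  have hnotlt : ∀ x y : C, x ∈ T → y ∉ T → ¬ w.lt x y := by
    intro x y hx hy h
    rw [hlt, hfT x hx, hfN y hy] at h
    have := hidx_lt y
    omega
  ext c
  simp only [topk, Finset.mem_filter, Finset.mem_univ, true_and]
  constructor
  · intro hc
    by_contra hcT
    have hsub : T ⊆ Finset.univ.filter fun d => w.lt c d := by
      intro d hd
      simp only [Finset.mem_filter, Finset.mem_univ, true_and]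
      exact hmem d c hd hcT
    have := Finset.card_le_card hsub
    omega
  · intro hc
    have hsub : (Finset.univ.filter fun d => w.lt c d) ⊆ T.erase c := by
      intro d hd
      simp only [Finset.mem_filter, Finset.mem_univ, true_and] at hd
      refine Finset.mem_erase.mpr ⟨fun h => ?_, ?_⟩
      · rw [h] at hd
        exact absurd ((hlt c c).mp hd) (lt_irrefl _)
      · by_contra hdT
        exact hnotlt c d hc hdT hd
    have h1 := Finset.card_le_card hsub
    have h2 : (T.erase c).card = k - 1 := by rw [Finset.card_erase_of_mem hc, hT]
    have : 1 ≤ k := by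
      rcases Nat.eq_zero_or_pos k with rfl | h
      · rw [Finset.card_eq_zero] at hT; rw [hT] at hc; simp at hc
      · exact h
    omega

/-- two votes are equivalent with respect to `k`-approval iff they have the
same set of top `k` candidates. -/
theorem statement_0 [Fintype C] [Nonempty C] (k : ℕ) (hk : 1 ≤ k)
    (hcard : k + 1 ≤ Fintype.card C) (tb : LinearOrder C) (v v' : LinearOrder C) :
    topk k v = topk k v' ↔
      ∀ U : List (LinearOrder C), winner k tb (U ++ [v]) = winner k tb (U ++ [v']) := by
  constructor
  · intro h U
    apply winner_congr
    funext c
    simp [sck_append, h]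
  · intro hU
    by_contra hne
    -- extract witnesses a ∈ topk v \ topk v', b ∈ topk v' \ topk v
    have hcv : (topk k v).card = k := card_topk k (by omega) v
    have hcv' : (topk k v').card = k := card_topk k (by omega) v'
    have hA : ∃ a, a ∈ topk k v ∧ a ∉ topk k v' := by
      by_contra h
      push_neg at h
      exact hne (Finset.eq_of_subset_of_card_le (fun x hx => h x hx) (by omega))
    have hB : ∃ b, b ∈ topk k v' ∧ b ∉ topk k v := by
      by_contra h
      push_neg at h
      exact hne (Finset.eq_of_subset_of_card_le (fun x hx => h x hx) (by omega)).symm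
    obtain ⟨a, hav, hav'⟩ := hA
    obtain ⟨b, hbv', hbv⟩ := hB
    have hab : a ≠ b := fun h => hav' (h ▸ hbv')
    rcases eq_or_lt_of_le hk with hk1 | hk2
    · -- k = 1
      have htv : topk k v = {a} :=
        (Finset.eq_of_subset_of_card_le (Finset.singleton_subset_iff.mpr hav)
          (by rw [hcv, Finset.card_singleton, hk1])).symm
      have htv' : topk k v' = {b} :=
        (Finset.eq_of_subset_of_card_le (Finset.singleton_subset_iff.mpr hbv')
          (by rw [hcv', Finset.card_singleton, hk1])).symm
      have h1 : winner k tb ([] ++ [v]) = a := by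
        apply winner_eq_of_strict_max
        intro c hc
        simp [sck, htv, hc]
      have h2 : winner k tb ([] ++ [v']) = b := by
        apply winner_eq_of_strict_max
        intro c hc
        simp [sck, htv', hc]
      exact hab ((h1.symm.trans (hU [])).trans h2)
    · -- k ≥ 2
      have hw : ∀ c : C, ∃ w : LinearOrder C,
          a ∈ topk k w ∧ b ∈ topk k w ∧ (c ≠ a → c ≠ b → c ∉ topk k w) := by
        intro c
        have hsub : (k - 2 : ℕ) ≤ (Finset.univ \ {a, b, c}).card := by
          have h1 := Finset.card_insert_le a ({b, c} : Finset C)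
          have h2 := Finset.card_insert_le b ({c} : Finset C)
          have h3 : ({c} : Finset C).card = 1 := Finset.card_singleton c
          have hsd := Finset.card_sdiff_of_subset (Finset.subset_univ ({a, b, c} : Finset C))
          rw [Finset.card_univ] at hsd
          omega
        obtain ⟨S, hSsub, hScard⟩ := Finset.exists_subset_card_eq hsub
        have haS : a ∉ S := fun h => by
          have := hSsub h; simp at this
        have hbS : b ∉ S := fun h => by
          have := hSsub h; simp at this
        have hcS : c ∉ S := fun h => by
          have := hSsub h; simp at this
        set T : Finset C := insert a (insert b S) with hTdef
        have hbT : b ∈ T := Finset.mem_insert.mpr (Or.inr (Finset.mem_insert_self _ _))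
        have haT : a ∈ T := Finset.mem_insert_self _ _
        have hcT : c ≠ a → c ≠ b → c ∉ T := by
          intro h1 h2 hc
          rcases Finset.mem_insert.mp hc with h | h
          · exact h1 h
          rcases Finset.mem_insert.mp h with h | h
          · exact h2 h
          · exact hcS h
        have hTcard : T.card = k := by
          rw [hTdef, Finset.card_insert_of_notMem, Finset.card_insert_of_notMem hbS, hScard]
          · omega
          · intro h
            rcases Finset.mem_insert.mp h with h | h
            · exact hab h
            · exact haS h
        obtain ⟨w, hwT⟩ := exists_vote k tb T hTcard
        exact ⟨w, hwT ▸ haT, hwT ▸ hbT, fun h1 h2 => hwT ▸ hcT h1 h2⟩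
      set g : C → LinearOrder C := fun c => (hw c).choose with hg
      have hg1 : ∀ c, a ∈ topk k (g c) := fun c => (hw c).choose_spec.1
      have hg2 : ∀ c, b ∈ topk k (g c) := fun c => (hw c).choose_spec.2.1
      have hg3 : ∀ c, c ≠ a → c ≠ b → c ∉ topk k (g c) := fun c => (hw c).choose_spec.2.2
      set s : Finset C := Finset.univ \ {a, b} with hs
      set m : ℕ := s.card with hm
      set U : List (LinearOrder C) := s.toList.map g with hUdef
      have hsck : ∀ d : C, sck k U d = ∑ c ∈ s, (if d ∈ topk k (g c) then 1 else 0) := by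
        intro d
        rw [hUdef, sck, List.map_map, ← Finset.sum_map_toList]
        simp only [Function.comp_def]
        congr with c
        congr
      have hsa : sck k U a = m := by
        rw [hsck]
        rw [Finset.sum_congr rfl (fun c _ => if_pos (hg1 c)), Finset.sum_const, smul_eq_mul,
          mul_one]
      have hsb : sck k U b = m := by
        rw [hsck]
        rw [Finset.sum_congr rfl (fun c _ => if_pos (hg2 c)), Finset.sum_const, smul_eq_mul,
          mul_one]
      have hsd : ∀ d ∈ s, sck k U d ≤ m - 1 := by
        intro d hd
        have hda : d ≠ a := by
          intro h; rw [hs] at hd; simp [h] at hd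
        have hdb : d ≠ b := by
          intro h; rw [hs] at hd; simp [h] at hd
        rw [hsck]
        rw [← Finset.sum_erase_add s _ hd, if_neg (hg3 d hda hdb), add_zero]
        calc ∑ c ∈ s.erase d, (if d ∈ topk k (g c) then 1 else 0)
            ≤ ∑ c ∈ s.erase d, 1 := Finset.sum_le_sum (fun c _ => by split <;> omega)
          _ = (s.erase d).card := by simp
          _ = m - 1 := by rw [Finset.card_erase_of_mem hd]
      have hmem_s : ∀ d : C, d ≠ a → d ≠ b → d ∈ s := by
        intro d h1 h2
        rw [hs]
        simp [h1, h2]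
      have h1 : winner k tb (U ++ [v]) = a := by
        apply winner_eq_of_strict_max
        intro c hc
        rw [sck_append, sck_append, hsa, if_pos hav]
        rcases eq_or_ne c b with rfl | hcb
        · rw [hsb, if_neg hbv]; omega
        · have := hsd c (hmem_s c hc hcb)
          have hm1 : 1 ≤ m := by
            rw [hm, hs, Finset.card_sdiff_of_subset (Finset.subset_univ _), Finset.card_univ]
            have h1 := Finset.card_insert_le a ({b} : Finset C)
            have h2 : ({b} : Finset C).card = 1 := Finset.card_singleton b
            omega
          split <;> omega
      have h2 : winner k tb (U ++ [v']) = b := by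
        apply winner_eq_of_strict_max
        intro c hc
        rw [sck_append, sck_append, hsb, if_pos hbv']
        rcases eq_or_ne c a with rfl | hca
        · rw [hsa, if_neg hav']; omega
        · have := hsd c (hmem_s c hca hc)
          have hm1 : 1 ≤ m := by
            rw [hm, hs, Finset.card_sdiff_of_subset (Finset.subset_univ _), Finset.card_univ]
            have h1 := Finset.card_insert_le a ({b} : Finset C)
            have h2 : ({b} : Finset C).card = 1 := Finset.card_singleton b
            omega
          split <;> omega
      exact hab ((h1.symm.trans (hU U)).trans h2)

end Paper
end

section
/- Let u and v be two linear orders on C with top(u) = a, top(v) = b and a ≠ b, let V_{-1} be any profile of votes of voters 2,…,n, and let w^u = R_1(V_{-1}, u) and w^v = R_1(V_{-1}, v) be the Plurality winners of the two resulting profiles. Then: (i) if w^u ≠ a then w^v ≠ a; (ii) if w^v ≠ b then w^u ≠ b; and (iii) if w^u ≠ a and w^v ≠ b, then w^u = w^v. -/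
open scoped Classical

namespace Paper

variable {C : Type*}

/-- The highest-ranked candidate of the vote `v`. -/
noncomputable def top [Fintype C] [Nonempty C] (v : LinearOrder C) : C :=
  @Finset.max' C v Finset.univ Finset.univ_nonempty

lemma mem_topk_one [Fintype C] [Nonempty C] (x : LinearOrder C) (c : C) :
    c ∈ topk 1 x ↔ c = top x := by
  unfold topk top
  simp only [Finset.mem_filter, Finset.mem_univ, true_and, Nat.lt_one_iff,
    Finset.card_eq_zero, Finset.filter_eq_empty_iff]
  constructor
  · intro h
    refine x.le_antisymm _ _ ?_ ?_
    · exact @Finset.le_max' C x _ c (Finset.mem_univ c)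
    · refine @Finset.max'_le C x _ _ c (fun d _ => (@not_lt C _ _ _).mp ?_)
      exact @h d trivial
  · intro h d _
    subst h
    exact (@not_lt C _ _ _).mpr (@Finset.le_max' C x _ d (Finset.mem_univ d))

lemma sck_cons [Fintype C] [Nonempty C] (x : LinearOrder C) (V : List (LinearOrder C)) (c : C) :
    sck 1 (x :: V) c = (if c = top x then 1 else 0) + sck 1 V c := by
  unfold sck
  simp [mem_topk_one]

lemma winner_mem [Fintype C] [Nonempty C] (k : ℕ) (tb : LinearOrder C)
    (V : List (LinearOrder C)) : ∀ y, sck k V y ≤ sck k V (winner k tb V) := by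
  unfold winner
  exact fun y => (Finset.mem_filter.mp
    (@Finset.max'_mem C tb (Finset.univ.filter fun x => ∀ y, sck k V y ≤ sck k V x) _)).2 y

lemma le_winner [Fintype C] [Nonempty C] (k : ℕ) (tb : LinearOrder C)
    (V : List (LinearOrder C)) (c : C) (hc : ∀ y, sck k V y ≤ sck k V c) :
    tb.le c (winner k tb V) := by
  unfold winner
  exact @Finset.le_max' C tb _ c (Finset.mem_filter.mpr ⟨Finset.mem_univ c, hc⟩)

lemma winner_eq_of_strict [Fintype C] [Nonempty C] (k : ℕ) (tb : LinearOrder C)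
    (V : List (LinearOrder C)) (c : C)
    (h : ∀ y, y ≠ c → sck k V y < sck k V c) : winner k tb V = c := by
  by_contra hne
  have h1 := winner_mem k tb V c
  have h2 := h _ hne
  omega

/-- comparing the Plurality outcomes of two ballots of voter 1 against a
fixed profile of the remaining voters. -/
theorem statement_9 [Fintype C] [Nonempty C] (tb u v : LinearOrder C)
    (Vrest : List (LinearOrder C)) (a b : C)
    (ha : top u = a) (hb : top v = b) (hab : a ≠ b) :
    (winner 1 tb (u :: Vrest) ≠ a → winner 1 tb (v :: Vrest) ≠ a) ∧
    (winner 1 tb (v :: Vrest) ≠ b → winner 1 tb (u :: Vrest) ≠ b) ∧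
    ((winner 1 tb (u :: Vrest) ≠ a ∧ winner 1 tb (v :: Vrest) ≠ b) →
      winner 1 tb (u :: Vrest) = winner 1 tb (v :: Vrest)) := by
  subst ha hb
  have hu := fun c => sck_cons u Vrest c
  have hv := fun c => sck_cons v Vrest c
  set a := top u with hadef
  set b := top v with hbdef
  have hWu := winner_mem 1 tb (u :: Vrest)
  have hWv := winner_mem 1 tb (v :: Vrest)
  set Wu := winner 1 tb (u :: Vrest) with hWudef
  set Wv := winner 1 tb (v :: Vrest) with hWvdef
  refine ⟨?_, ?_, ?_⟩
  · intro h1 h2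
    apply h1
    apply winner_eq_of_strict
    intro y hy
    have h3 := hWv y
    rw [hv, hv, h2, if_neg hab] at h3
    rw [hu, hu, if_pos rfl, if_neg hy]
    split_ifs at h3 <;> omega
  · intro h1 h2
    apply h1
    apply winner_eq_of_strict
    intro y hy
    have h3 := hWu y
    rw [hu, hu, h2, if_neg (Ne.symm hab)] at h3
    rw [hv, hv, if_pos rfl, if_neg hy]
    split_ifs at h3 <;> omega
  · rintro ⟨h1, h2⟩
    have e1 := hWu Wv
    have e2 := hWv Wu
    rw [hu, hu, if_neg h1] at e1
    rw [hv, hv, if_neg h2] at e2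
    have hWva : Wv ≠ a := by
      intro h; rw [if_pos h] at e1; split_ifs at e2 <;> omega
    have hWub : Wu ≠ b := by
      intro h; rw [if_pos h] at e2; split_ifs at e1 <;> omega
    rw [if_neg hWva] at e1
    rw [if_neg hWub] at e2
    have hS : sck 1 Vrest Wu = sck 1 Vrest Wv := by omega
    have m1 : ∀ y, sck 1 (v :: Vrest) y ≤ sck 1 (v :: Vrest) Wu := by
      intro y
      rw [hv, hv, if_neg hWub, hS]
      have h4 := hWv y
      rw [hv, hv, if_neg h2] at h4
      exact h4
    have m2 : ∀ y, sck 1 (u :: Vrest) y ≤ sck 1 (u :: Vrest) Wv := by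
      intro y
      rw [hu, hu, if_neg hWva, ← hS]
      have h4 := hWu y
      rw [hu, hu, if_neg h1] at h4
      exact h4
    have l1 : tb.le Wu Wv := by rw [hWvdef]; exact le_winner 1 tb (v :: Vrest) Wu m1
    have l2 : tb.le Wv Wu := by rw [hWudef]; exact le_winner 1 tb (u :: Vrest) Wv m2
    exact tb.le_antisymm _ _ l1 l2

end Paper
end

section
/- Let (Γ⁰, Σ⁰) be an instance of Exact Cover by 3-Sets with |Γ⁰| = 3ν'. Construct (Γ, Σ) as follows: add three new elements h₁, h₂, h₃ to the ground set and the set {h₁, h₂, h₃} to the collection; add 3(ν'+2) further new elements x_i, y_i, z_i for i = 1,…,ν'+2, together with the sets S_i = {x_i, y_i, z_i} for i = 1,…,ν'+2, the sets S'_i = {y_i, z_i, x_{i+1}} for i = 1,…,ν'+1, and S'_{ν'+2} = {y_{ν'+2}, z_{ν'+2}, x_1}. Then (Γ, Σ) has an exact cover if and only if (Γ⁰, Σ⁰) has an exact cover. -/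
/-!
The new elements are disjoint from `Γ⁰` and every new set consists of new elements, so an exact
cover of `Γ` splits into the sets of `Σ⁰` it uses, which cover `Γ⁰`, and the new sets, which cover
the new elements; since every set has three elements, counting shows both parts are exact
covers. Conversely, `{h₁, h₂, h₃}` and `S_1, …, S_{ν'+2}` cover the new elements exactly, and
can be added to any exact cover of `Γ⁰`.
-/

open scoped Classical

namespace Paper

variable {α : Type*} [DecidableEq α]

/-- `(Γ, Sig)` admits an exact cover: a subcollection of `Sig` of `|Γ|/3` sets whose union
is `Γ` (the sets in any X3C instance have three elements each, so such a subcollection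
necessarily consists of pairwise disjoint sets covering `Γ`). -/
def HasExactCover (Γ : Finset α) (Sig : Finset (Finset α)) : Prop :=
  ∃ T ⊆ Sig, 3 * T.card = Γ.card ∧ T.biUnion id = Γ

namespace HasExactCover

variable {Γ Δ : Finset α} {Sig Tau : Finset (Finset α)}

lemma union (hΓ : Disjoint Γ Δ) (hSig : Disjoint Sig Tau) (h₁ : HasExactCover Γ Sig)
    (h₂ : HasExactCover Δ Tau) : HasExactCover (Γ ∪ Δ) (Sig ∪ Tau) := by
  obtain ⟨T, hT, hTcard, hTcover⟩ := h₁
  obtain ⟨U, hU, hUcard, hUcover⟩ := h₂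
  refine ⟨T ∪ U, Finset.union_subset_union hT hU, ?_, ?_⟩
  · rw [Finset.card_union_of_disjoint (hSig.mono hT hU), Finset.card_union_of_disjoint hΓ]
    omega
  · rw [Finset.union_biUnion, hTcover, hUcover]

lemma of_union_left (hΓ : Disjoint Γ Δ) (hSigΓ : ∀ σ ∈ Sig, σ ⊆ Γ) (hTauΔ : ∀ τ ∈ Tau, τ ⊆ Δ)
    (hcard : ∀ σ ∈ Sig ∪ Tau, σ.card ≤ 3) (h : HasExactCover (Γ ∪ Δ) (Sig ∪ Tau)) :
    HasExactCover Γ Sig := by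
  obtain ⟨T, hT, hTcard, hTcover⟩ := h
  have hrest : ∀ τ ∈ T \ Sig, τ ⊆ Δ := fun τ hτ ↦ by
    rw [Finset.mem_sdiff] at hτ
    exact hTauΔ τ ((Finset.mem_union.1 (hT hτ.1)).resolve_left hτ.2)
  have hmem : ∀ a ∈ Γ ∪ Δ, ∃ σ ∈ T, a ∈ σ := fun a ha ↦ by
    simpa [← hTcover] using ha
  have hΓsub : Γ ⊆ (T ∩ Sig).biUnion id := fun a ha ↦ by
    obtain ⟨σ, hσT, haσ⟩ := hmem a (Finset.mem_union_left Δ ha)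
    by_cases hσ : σ ∈ Sig
    · exact Finset.mem_biUnion.2 ⟨σ, Finset.mem_inter.2 ⟨hσT, hσ⟩, haσ⟩
    · exact absurd (hrest σ (Finset.mem_sdiff.2 ⟨hσT, hσ⟩) haσ) (Finset.disjoint_left.1 hΓ ha)
  have hΔsub : Δ ⊆ (T \ Sig).biUnion id := fun a ha ↦ by
    obtain ⟨σ, hσT, haσ⟩ := hmem a (Finset.mem_union_right Γ ha)
    by_cases hσ : σ ∈ Sig
    · exact absurd (hSigΓ σ hσ haσ) (Finset.disjoint_right.1 hΓ ha)
    · exact Finset.mem_biUnion.2 ⟨σ, Finset.mem_sdiff.2 ⟨hσT, hσ⟩, haσ⟩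
  have hΓle : Γ.card ≤ (T ∩ Sig).card * 3 := (Finset.card_le_card hΓsub).trans <|
    Finset.card_biUnion_le_card_mul _ _ _ fun σ hσ ↦ hcard σ (hT (Finset.inter_subset_left hσ))
  have hΔle : Δ.card ≤ (T \ Sig).card * 3 := (Finset.card_le_card hΔsub).trans <|
    Finset.card_biUnion_le_card_mul _ _ _ fun σ hσ ↦ hcard σ (hT (Finset.sdiff_subset hσ))
  -- both bounds add up to the exact count `3 * T.card`, so both are tight
  have hsplit := Finset.card_inter_add_card_sdiff T Sig
  rw [Finset.card_union_of_disjoint hΓ] at hTcard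
  refine ⟨T ∩ Sig, Finset.inter_subset_right, by omega, subset_antisymm ?_ hΓsub⟩
  exact Finset.biUnion_subset.2 fun σ hσ ↦ hSigΓ σ (Finset.mem_inter.1 hσ).2

end HasExactCover

section Construction

variable (ν' : ℕ) (e : Fin 3 ⊕ (Fin (ν' + 2) × Fin 3) → α)

/-- The new elements added to the ground set: `h₁, h₂, h₃` (images of `Sum.inl`) and
`x_i, y_i, z_i` for `i = 1, …, ν'+2` (images of `Sum.inr (i, 0)`, `Sum.inr (i, 1)`,
`Sum.inr (i, 2)` respectively). -/
def newElems : Finset α := Finset.univ.image e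

/-- The added set `{h₁, h₂, h₃}`. -/
def hTriple : Finset α := {e (Sum.inl 0), e (Sum.inl 1), e (Sum.inl 2)}

/-- The added set `S_i = {x_i, y_i, z_i}`. -/
def Sset (i : Fin (ν' + 2)) : Finset α :=
  {e (Sum.inr (i, 0)), e (Sum.inr (i, 1)), e (Sum.inr (i, 2))}

/-- The added set `S'_i = {y_i, z_i, x_{i+1}}` (indices cyclic, so that
`S'_{ν'+2} = {y_{ν'+2}, z_{ν'+2}, x_1}`). -/
def S'set (i : Fin (ν' + 2)) : Finset α :=
  {e (Sum.inr (i, 1)), e (Sum.inr (i, 2)), e (Sum.inr (i + 1, 0))}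

/-- The collection `Σ` of the modified instance. -/
def bigSigma (Sig0 : Finset (Finset α)) : Finset (Finset α) :=
  Sig0 ∪ {hTriple ν' e} ∪ Finset.univ.image (Sset ν' e) ∪ Finset.univ.image (S'set ν' e)

def newSets : Finset (Finset α) :=
  {hTriple ν' e} ∪ Finset.univ.image (Sset ν' e) ∪ Finset.univ.image (S'set ν' e)

lemma bigSigma_eq_union_newSets (Sig0 : Finset (Finset α)) :
    bigSigma ν' e Sig0 = Sig0 ∪ newSets ν' e := by
  simp only [bigSigma, newSets, Finset.union_assoc]

lemma subset_newElems_of_mem_newSets {σ : Finset α} (hσ : σ ∈ newSets ν' e) :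
    σ ⊆ newElems ν' e := by
  simp only [newSets, Finset.mem_union, Finset.mem_singleton, Finset.mem_image,
    Finset.mem_univ, true_and] at hσ
  rcases hσ with (rfl | ⟨i, rfl⟩) | ⟨i, rfl⟩ <;>
    simp [hTriple, Sset, S'set, newElems, Finset.insert_subset_iff]

variable {ν' e}

lemma card_eq_three_of_mem_newSets (he : Function.Injective e) {σ : Finset α}
    (hσ : σ ∈ newSets ν' e) : σ.card = 3 := by
  simp only [newSets, Finset.mem_union, Finset.mem_singleton, Finset.mem_image,
    Finset.mem_univ, true_and] at hσ
  rcases hσ with (rfl | ⟨i, rfl⟩) | ⟨i, rfl⟩ <;> simp only [hTriple, Sset, S'set] <;>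
  · rw [Finset.card_insert_of_notMem, Finset.card_insert_of_notMem, Finset.card_singleton] <;>
      simp [he.eq_iff, Prod.ext_iff]

lemma Sset_injective (he : Function.Injective e) : Function.Injective (Sset ν' e) := by
  intro i j hij
  have : e (Sum.inr (i, 0)) ∈ Sset ν' e j := hij ▸ by simp [Sset]
  simpa [Sset, he.eq_iff, Prod.ext_iff] using this

lemma hTriple_notMem_image_Sset (he : Function.Injective e) :
    hTriple ν' e ∉ Finset.univ.image (Sset ν' e) := by
  rintro h
  obtain ⟨i, -, hi⟩ := Finset.mem_image.1 h
  have : e (Sum.inl 0) ∈ Sset ν' e i := hi ▸ by simp [hTriple]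
  simp [Sset, he.eq_iff] at this

lemma card_newElems (he : Function.Injective e) : (newElems ν' e).card = 3 * (ν' + 3) := by
  rw [newElems, Finset.card_image_of_injective _ he, Finset.card_univ]
  simp only [Fintype.card_sum, Fintype.card_prod, Fintype.card_fin]
  ring

-- The cover: `{h₁, h₂, h₃}` together with all the `S_i`.
lemma hasExactCover_newElems_newSets (he : Function.Injective e) :
    HasExactCover (newElems ν' e) (newSets ν' e) := by
  have hsub : {hTriple ν' e} ∪ Finset.univ.image (Sset ν' e) ⊆ newSets ν' e :=
    Finset.subset_union_left
  refine ⟨_, hsub, ?_, ?_⟩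
  · rw [Finset.card_union_of_disjoint
      (Finset.disjoint_singleton_left.2 (hTriple_notMem_image_Sset he)),
      Finset.card_image_of_injective _ (Sset_injective he), card_newElems he]
    simp only [Finset.card_singleton, Finset.card_univ, Fintype.card_fin]
    ring
  · refine subset_antisymm (Finset.biUnion_subset.2 fun σ hσ ↦
      subset_newElems_of_mem_newSets ν' e (hsub hσ)) fun a ha ↦ ?_
    obtain ⟨q, -, rfl⟩ := Finset.mem_image.1 ha
    rcases q with j | ⟨i, j⟩
    · exact Finset.mem_biUnion.2 ⟨hTriple ν' e, by simp, by fin_cases j <;> simp [hTriple]⟩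
    · exact Finset.mem_biUnion.2 ⟨Sset ν' e i, by simp, by fin_cases j <;> simp [Sset]⟩

theorem statement_11_general (Γ0 : Finset α) (Sig0 : Finset (Finset α))
    (hSig0 : ∀ σ ∈ Sig0, σ ⊆ Γ0 ∧ σ.card = 3)
    (he : Function.Injective e) (hfresh : ∀ q, e q ∉ Γ0) :
    HasExactCover (Γ0 ∪ newElems ν' e) (bigSigma ν' e Sig0) ↔ HasExactCover Γ0 Sig0 := by
  have hdisj : Disjoint Γ0 (newElems ν' e) := Finset.disjoint_right.2 fun a ha ↦ by
    obtain ⟨q, -, rfl⟩ := Finset.mem_image.1 ha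
    exact hfresh q
  rw [bigSigma_eq_union_newSets]
  refine ⟨HasExactCover.of_union_left hdisj (fun σ hσ ↦ (hSig0 σ hσ).1)
      (fun _ ↦ subset_newElems_of_mem_newSets ν' e) ?_, fun h ↦ h.union hdisj ?_
      (hasExactCover_newElems_newSets he)⟩
  · intro σ hσ
    rcases Finset.mem_union.1 hσ with hσ | hσ
    · exact (hSig0 σ hσ).2.le
    · exact (card_eq_three_of_mem_newSets he hσ).le
  · refine Finset.disjoint_left.2 fun σ hσ hσ' ↦ ?_
    have hempty : σ = ∅ := (Finset.disjoint_self_iff_empty σ).1 <|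
      hdisj.mono (hSig0 σ hσ).1 (subset_newElems_of_mem_newSets ν' e hσ')
    simpa [hempty] using (hSig0 σ hσ).2

/-- the modified X3C instance `(Γ, Σ)` has an exact cover iff the original
instance `(Γ⁰, Σ⁰)` has one. -/
theorem statement_11 (Γ0 : Finset α) (Sig0 : Finset (Finset α))
    (hΓ0 : Γ0.card = 3 * ν')
    (hSig0 : ∀ σ ∈ Sig0, σ ⊆ Γ0 ∧ σ.card = 3)
    (he : Function.Injective e) (hfresh : ∀ q, e q ∉ Γ0) :
    HasExactCover (Γ0 ∪ newElems ν' e) (bigSigma ν' e Sig0) ↔ HasExactCover Γ0 Sig0 :=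
  statement_11_general Γ0 Sig0 hSig0 he hfresh

end Construction

end Paper
end
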